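/- For u = φ and v = φ', the deformed power of a difference factors into a product: (x ⊖_{φ,φ'} y)_{s,t}^{(n)} := Σ_{k=0}^n {n choose k}_{s,t} φ^{C(n−k,2)} φ'^{C(k,2)} x^{n−k} (−y)^k = ∏_{k=0}^{n−1} (φᵏx − φ'ᵏy). -/
import Mathlib

noncomputable section

def genFib (φ φ' : ℝ) (n : ℕ) : ℝ := (φ ^ n - φ' ^ n) / (φ - φ')

def fibtorial (φ φ' : ℝ) (n : ℕ) : ℝ := ∏ j ∈ Finset.range n, genFib φ φ' (j + 1)

def fibonomial (φ φ' : ℝ) (n k : ℕ) : ℝ :=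
  fibtorial φ φ' n / (fibtorial φ φ' k * fibtorial φ φ' (n - k))

lemma fibtorial_succ (φ φ' : ℝ) (n : ℕ) :
    fibtorial φ φ' (n + 1) = fibtorial φ φ' n * genFib φ φ' (n + 1) :=
  Finset.prod_range_succ _ _

lemma fibtorial_ne_zero (φ φ' : ℝ) (n : ℕ)
    (h : ∀ j, 1 ≤ j → j ≤ n → genFib φ φ' j ≠ 0) : fibtorial φ φ' n ≠ 0 :=
  Finset.prod_ne_zero_iff.mpr fun j hj =>
    h (j + 1) (by omega) (by have := Finset.mem_range.mp hj; omega)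

lemma genFib_add (φ φ' : ℝ) (a b : ℕ) :
    genFib φ φ' (a + b) = φ ^ a * genFib φ φ' b + φ' ^ b * genFib φ φ' a := by
  by_cases h : φ = φ'
  · simp [genFib, h]
  · have h' : φ - φ' ≠ 0 := sub_ne_zero.mpr h
    unfold genFib
    field_simp
    ring

lemma pascal (φ φ' : ℝ) (a b : ℕ)
    (h : ∀ j, 1 ≤ j → j ≤ a + b + 1 → genFib φ φ' j ≠ 0) :
    fibonomial φ φ' (a + b + 2) (a + 1) =
      φ ^ (a + 1) * fibonomial φ φ' (a + b + 1) (a + 1) +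
        φ' ^ (b + 1) * fibonomial φ φ' (a + b + 1) a := by
  have ha : fibtorial φ φ' (a + 1) ≠ 0 :=
    fibtorial_ne_zero _ _ _ fun j h1 h2 => h j h1 (by omega)
  have hb : fibtorial φ φ' (b + 1) ≠ 0 :=
    fibtorial_ne_zero _ _ _ fun j h1 h2 => h j h1 (by omega)
  have ha' : fibtorial φ φ' a ≠ 0 :=
    fibtorial_ne_zero _ _ _ fun j h1 h2 => h j h1 (by omega)
  have hb' : fibtorial φ φ' b ≠ 0 :=
    fibtorial_ne_zero _ _ _ fun j h1 h2 => h j h1 (by omega)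
  have e1 : a + b + 2 - (a + 1) = b + 1 := by omega
  have e2 : a + b + 1 - (a + 1) = b := by omega
  have e3 : a + b + 1 - a = b + 1 := by omega
  have key : genFib φ φ' (a + b + 2) =
      φ ^ (a + 1) * genFib φ φ' (b + 1) + φ' ^ (b + 1) * genFib φ φ' (a + 1) := by
    have := genFib_add φ φ' (a + 1) (b + 1)
    have e : a + 1 + (b + 1) = a + b + 2 := by omega
    rwa [e] at this
  have hga : genFib φ φ' (a + 1) ≠ 0 := h _ (by omega) (by omega)
  have hgb : genFib φ φ' (b + 1) ≠ 0 := h _ (by omega) (by omega)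
  unfold fibonomial
  rw [e1, e2, e3]
  have h2 : a + b + 2 = (a + b + 1) + 1 := by omega
  rw [h2, fibtorial_succ, fibtorial_succ φ φ' a, fibtorial_succ φ φ' b]
  rw [← h2, key]
  field_simp

@[simp] lemma fibtorial_zero (φ φ' : ℝ) : fibtorial φ φ' 0 = 1 := Finset.prod_range_zero _

lemma fibonomial_zero (φ φ' : ℝ) (n : ℕ) (h : fibtorial φ φ' n ≠ 0) :
    fibonomial φ φ' n 0 = 1 := by
  simp [fibonomial, h]

lemma fibonomial_self (φ φ' : ℝ) (n : ℕ) (h : fibtorial φ φ' n ≠ 0) :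
    fibonomial φ φ' n n = 1 := by
  simp [fibonomial, h]

lemma choose2 (n : ℕ) : (n + 1).choose 2 = n.choose 2 + n := by
  rw [Nat.choose_succ_succ, Nat.choose_one_right, Nat.add_comm]

def term (φ φ' x y : ℝ) (n k : ℕ) : ℝ :=
  fibonomial φ φ' n k * φ ^ Nat.choose (n - k) 2 * φ' ^ Nat.choose k 2 *
    x ^ (n - k) * (-y) ^ k

lemma key (φ φ' x y : ℝ) : ∀ n : ℕ, (∀ j, 1 ≤ j → j ≤ n → genFib φ φ' j ≠ 0) →
    ∑ k ∈ Finset.range (n + 1), term φ φ' x y n k =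
      ∏ k ∈ Finset.range n, (φ ^ k * x - φ' ^ k * y) := by
  intro n
  induction n with
  | zero => intro _; simp [term, fibonomial]
  | succ n ih =>
    intro hnz
    have hnz' : ∀ j, 1 ≤ j → j ≤ n → genFib φ φ' j ≠ 0 := fun j h1 h2 => hnz j h1 (by omega)
    have hfn : fibtorial φ φ' n ≠ 0 := fibtorial_ne_zero _ _ _ hnz'
    have hfn1 : fibtorial φ φ' (n + 1) ≠ 0 := fibtorial_ne_zero _ _ _ hnz
    have E0 : term φ φ' x y (n + 1) 0 = term φ φ' x y n 0 * (φ ^ n * x) := by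
      simp only [term, Nat.sub_zero, fibonomial_zero _ _ _ hfn1, fibonomial_zero _ _ _ hfn,
        choose2, pow_add, pow_succ]
      ring
    have Etop : term φ φ' x y (n + 1) (n + 1) = term φ φ' x y n n * (φ' ^ n * (-y)) := by
      simp only [term, Nat.sub_self, fibonomial_self _ _ _ hfn1, fibonomial_self _ _ _ hfn,
        choose2, pow_add, pow_succ]
      ring
    have E1 : ∀ k ∈ Finset.range n, term φ φ' x y (n + 1) (k + 1) =
        term φ φ' x y n (k + 1) * (φ ^ n * x) + term φ φ' x y n k * (φ' ^ n * (-y)) := by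
      intro k hk
      have hk' : k < n := Finset.mem_range.mp hk
      obtain ⟨m, rfl⟩ : ∃ m, n = k + m + 1 := ⟨n - k - 1, by omega⟩
      have s1 : k + m + 1 + 1 - (k + 1) = m + 1 := by omega
      have s2 : k + m + 1 - (k + 1) = m := by omega
      have s3 : k + m + 1 - k = m + 1 := by omega
      have hp := pascal φ φ' k m (fun j h1 h2 => hnz' j h1 (by omega))
      have e : k + m + 2 = k + m + 1 + 1 := by omega
      rw [e] at hp
      simp only [term, s1, s2, s3, hp, choose2, pow_add, pow_succ]
      ring
    have hx : ∑ k ∈ Finset.range (n + 1), term φ φ' x y n k * (φ ^ n * x) =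
        ∑ k ∈ Finset.range n, term φ φ' x y n (k + 1) * (φ ^ n * x) +
          term φ φ' x y n 0 * (φ ^ n * x) := Finset.sum_range_succ' _ n
    have hy : ∑ k ∈ Finset.range (n + 1), term φ φ' x y n k * (φ' ^ n * (-y)) =
        ∑ k ∈ Finset.range n, term φ φ' x y n k * (φ' ^ n * (-y)) +
          term φ φ' x y n n * (φ' ^ n * (-y)) := Finset.sum_range_succ _ n
    calc ∑ k ∈ Finset.range (n + 1 + 1), term φ φ' x y (n + 1) k
        = ∑ k ∈ Finset.range n, term φ φ' x y (n + 1) (k + 1) + term φ φ' x y (n + 1) 0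
            + term φ φ' x y (n + 1) (n + 1) := by
          rw [Finset.sum_range_succ, Finset.sum_range_succ']
      _ = ∑ k ∈ Finset.range n, (term φ φ' x y n (k + 1) * (φ ^ n * x)
            + term φ φ' x y n k * (φ' ^ n * (-y)))
            + term φ φ' x y n 0 * (φ ^ n * x) + term φ φ' x y n n * (φ' ^ n * (-y)) := by
          rw [Finset.sum_congr rfl E1, E0, Etop]
      _ = (∑ k ∈ Finset.range n, term φ φ' x y n (k + 1) * (φ ^ n * x)
            + term φ φ' x y n 0 * (φ ^ n * x))
          + (∑ k ∈ Finset.range n, term φ φ' x y n k * (φ' ^ n * (-y))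
            + term φ φ' x y n n * (φ' ^ n * (-y))) := by
          rw [Finset.sum_add_distrib]; ring
      _ = (∑ k ∈ Finset.range (n + 1), term φ φ' x y n k) * (φ ^ n * x)
          + (∑ k ∈ Finset.range (n + 1), term φ φ' x y n k) * (φ' ^ n * (-y)) := by
          rw [← hx, ← hy, Finset.sum_mul, Finset.sum_mul]
      _ = (∑ k ∈ Finset.range (n + 1), term φ φ' x y n k) * (φ ^ n * x - φ' ^ n * y) := by
          ring
      _ = ∏ k ∈ Finset.range (n + 1), (φ ^ k * x - φ' ^ k * y) := by
          rw [ih hnz', ← Finset.prod_range_succ]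

/-- (s,t)-analog of the Gauss binomial formula:
(x ⊖_{φ,φ'} y)^{(n)} = ∏_{k=0}^{n−1} (φᵏx − φ'ᵏy). -/
theorem defPow_sub_prod (s t : ℝ) (hs : s ≠ 0) (ht : t ≠ 0)
    (hdisc : s ^ 2 + 4 * t > 0) (φ φ' : ℝ)
    (hφ : φ = (s + Real.sqrt (s ^ 2 + 4 * t)) / 2)
    (hφ' : φ' = (s - Real.sqrt (s ^ 2 + 4 * t)) / 2)
    (x y : ℝ) (n : ℕ)
    (hnz : ∀ j, 1 ≤ j → j ≤ n → genFib φ φ' j ≠ 0) :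
    ∑ k ∈ Finset.range (n + 1),
        fibonomial φ φ' n k * φ ^ Nat.choose (n - k) 2 * φ' ^ Nat.choose k 2 *
          x ^ (n - k) * (-y) ^ k =
      ∏ k ∈ Finset.range n, (φ ^ k * x - φ' ^ k * y) := by
  have h := key φ φ' x y n hnz
  simp only [term] at h
  exact h
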